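/- Let n, k be positive integers with n ≥ 8k and let i ∈ {1,...,n} be such that k·(i/n)·((n−i)/n) < 1 and i > n/2. If H ~ Hyp(n,i,k), then P(H ≥ i·k/n) ≥ k/n. -/

import Mathlib

/-- The probability mass function of the hypergeometric distribution `Hyp(n,i,k)`. -/
noncomputable def hypPMF (n i k j : ℕ) : ℝ :=
  ((Nat.choose i j : ℝ) * (Nat.choose (n - i) (k - j) : ℝ)) / (Nat.choose n k : ℝ)

/-- `P(H ≥ t)` for `H ~ Hyp(n,i,k)`. -/
noncomputable def hypTail (n i k : ℕ) (t : ℝ) : ℝ :=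
  ∑ j ∈ Finset.range (k + 1), if t ≤ (j : ℝ) then hypPMF n i k j else 0

/-!
Write `s = k(n-i)/n`, so that the threshold `ik/n` is `k - s`; since `i > n/2` the variance bound
gives `s < 2`. The top probability `P(H = k) = ∏_{m<k} (i-m)/(n-m)` is at least `(1-x)^k` with
`x = (n-i)/(n-k+1)`, and `kx ≤ 8s/7` because `n ≥ 8k`. If `s < 1` the tail contains `H = k`, and
`(1-x)^k ≥ 1/8 ≥ k/n`. Otherwise it contains `H ∈ {k-1, k}`, and
`P(H = k-1) = P(H = k) · k(n-i)/(i-k+1) ≥ s² · P(H = k)` by the variance bound again, so the tail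
is at least `(1+s²)(1-x)^k ≥ 1/8`. Both numerical bounds follow from Bernoulli's inequality
`(1-x)^k ≥ (1-kx/m)^m` for a suitable `m ≤ k`.
-/

theorem one_sub_div_mul_pow_le_one_sub_pow {x : ℝ} {k m : ℕ} (hm : 0 < m) (hmk : m ≤ k)
    (hx : (k / m : ℝ) * x ≤ 1) : (1 - (k / m : ℝ) * x) ^ m ≤ (1 - x) ^ k := by
  have hm' : (0 : ℝ) < m := by exact_mod_cast hm
  have hkm : (1 : ℝ) ≤ k / m := (one_le_div hm').mpr (by exact_mod_cast hmk)
  have hx1 : x ≤ 1 := by nlinarith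
  have hpow : (1 - x) ^ k = ((1 - x) ^ ((k : ℝ) / m)) ^ m := by
    rw [← Real.rpow_natCast _ m, ← Real.rpow_mul (by linarith),
      div_mul_cancel₀ _ hm'.ne', Real.rpow_natCast]
  rw [hpow]
  refine pow_le_pow_left₀ (by linarith) ?_ m
  simpa [sub_eq_add_neg] using one_add_mul_self_le_rpow_one_add (by linarith : -1 ≤ -x) hkm

theorem one_sub_pow_mul_descFactorial_le {n i k : ℕ} {x : ℝ} (hx0 : 0 ≤ x) (hx1 : x ≤ 1)
    (hki : k ≤ i) (hin : i ≤ n) (h : (n - i : ℝ) ≤ x * (n - k + 1)) :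
    (1 - x) ^ k * n.descFactorial k ≤ i.descFactorial k := by
  induction k with
  | zero => simp
  | succ k ih =>
    have hk : (k : ℝ) + 1 ≤ i := by exact_mod_cast hki
    have ih := ih (by omega) (by push_cast at h; nlinarith)
    rw [Nat.descFactorial_succ, Nat.descFactorial_succ]
    push_cast [Nat.cast_sub (by omega : k ≤ n), Nat.cast_sub (by omega : k ≤ i)]
    have hstep : (1 - x) * (n - k) ≤ (i - k : ℝ) := by push_cast at h; linarith
    calc (1 - x) ^ (k + 1) * ((n - k) * n.descFactorial k)
        = ((1 - x) * (n - k)) * ((1 - x) ^ k * n.descFactorial k) := by ring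
      _ ≤ (i - k) * i.descFactorial k :=
        mul_le_mul hstep ih (by positivity) (by linarith)

theorem one_sub_pow_mul_choose_le {n i k : ℕ} {x : ℝ} (hx0 : 0 ≤ x) (hx1 : x ≤ 1)
    (hki : k ≤ i) (hin : i ≤ n) (h : (n - i : ℝ) ≤ x * (n - k + 1)) :
    (1 - x) ^ k * n.choose k ≤ i.choose k := by
  have hdesc := one_sub_pow_mul_descFactorial_le hx0 hx1 hki hin h
  simp only [Nat.descFactorial_eq_factorial_mul_choose, Nat.cast_mul] at hdesc
  have hfac : (0 : ℝ) < k.factorial := by exact_mod_cast k.factorial_pos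
  nlinarith

theorem hypPMF_nonneg (n i k j : ℕ) : 0 ≤ hypPMF n i k j := by
  unfold hypPMF; positivity

theorem hypPMF_self (n i k : ℕ) : hypPMF n i k k = i.choose k / n.choose k := by
  simp [hypPMF]

theorem one_sub_pow_le_hypPMF_self {n i k : ℕ} (hki : k ≤ i) (hin : i ≤ n) :
    (1 - (n - i : ℝ) / (n - k + 1)) ^ k ≤ hypPMF n i k k := by
  have hki' : (k : ℝ) ≤ i := by exact_mod_cast hki
  have hin' : (i : ℝ) ≤ n := by exact_mod_cast hin
  have hpos : (0 : ℝ) < n - k + 1 := by linarith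
  have hchoose : (0 : ℝ) < n.choose k := by exact_mod_cast Nat.choose_pos (hki.trans hin)
  rw [hypPMF_self, le_div_iff₀ hchoose]
  refine one_sub_pow_mul_choose_le (div_nonneg (by linarith) hpos.le)
    ((div_le_one hpos).mpr (by linarith)) hki hin (div_mul_cancel₀ _ hpos.ne').ge

theorem hypPMF_pred_mul {n i k : ℕ} (hk : 1 ≤ k) (hki : k ≤ i) (hin : i ≤ n) :
    hypPMF n i k (k - 1) * (i - k + 1) = hypPMF n i k k * (k * (n - i)) := by
  have hrec := Nat.choose_succ_right_eq i (k - 1)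
  rw [Nat.sub_add_cancel hk] at hrec
  have hrec' : (i.choose (k - 1) : ℝ) * (i - k + 1) = i.choose k * k := by
    have := congrArg (fun m : ℕ => (m : ℝ)) hrec
    push_cast [Nat.cast_sub (show k - 1 ≤ i by omega), Nat.cast_sub hk] at this
    linarith
  simp only [hypPMF, Nat.sub_sub_self hk, Nat.sub_self, Nat.choose_one_right, Nat.choose_zero_right]
  push_cast [Nat.cast_sub hin]
  rw [div_mul_eq_mul_div, div_mul_eq_mul_div, mul_right_comm, hrec']
  ring

theorem sum_hypPMF_le_hypTail {n i k : ℕ} {t : ℝ} (s : Finset ℕ)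
    (hs : ∀ j ∈ s, j ≤ k ∧ t ≤ j) : ∑ j ∈ s, hypPMF n i k j ≤ hypTail n i k t := by
  rw [hypTail, ← Finset.sum_filter]
  refine Finset.sum_le_sum_of_subset_of_nonneg (fun j hj => ?_)
    (fun j _ _ => hypPMF_nonneg n i k j)
  simp only [Finset.mem_filter, Finset.mem_range]
  exact ⟨Nat.lt_succ_of_le (hs j hj).1, (hs j hj).2⟩

theorem hypPMF_self_le_hypTail {n i k : ℕ} {t : ℝ} (ht : t ≤ k) :
    hypPMF n i k k ≤ hypTail n i k t := by
  simpa using sum_hypPMF_le_hypTail (n := n) (i := i) {k} (by simpa using ht)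

theorem hypPMF_pred_add_hypPMF_self_le_hypTail {n i k : ℕ} {t : ℝ} (hk : 1 ≤ k)
    (ht : t ≤ k - 1) : hypPMF n i k (k - 1) + hypPMF n i k k ≤ hypTail n i k t := by
  rw [← Finset.sum_pair (show k - 1 ≠ k by omega)]
  refine sum_hypPMF_le_hypTail _ fun j hj => ?_
  simp only [Finset.mem_insert, Finset.mem_singleton] at hj
  rcases hj with rfl | rfl
  · exact ⟨Nat.sub_le k 1, by rwa [Nat.cast_sub hk, Nat.cast_one]⟩
  · exact ⟨le_rfl, by linarith⟩

theorem sq_mul_hypPMF_self_le_hypPMF_pred {n i k : ℕ} (hk : 1 ≤ k) (hki : k ≤ i) (hin : i ≤ n)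
    (hvar : (k : ℝ) * (i / n) * ((n - i) / n) ≤ 1) :
    (k * (n - i) / n : ℝ) ^ 2 * hypPMF n i k k ≤ hypPMF n i k (k - 1) := by
  have hk' : (1 : ℝ) ≤ k := by exact_mod_cast hk
  have hki' : (k : ℝ) ≤ i := by exact_mod_cast hki
  have hin' : (i : ℝ) ≤ n := by exact_mod_cast hin
  have hN : (0 : ℝ) < n := by linarith
  have hkD : 0 ≤ (k * (n - i) : ℝ) := by nlinarith
  have hvar' : (k * (n - i) : ℝ) * i ≤ n ^ 2 := by
    have := mul_le_mul_of_nonneg_right hvar (sq_nonneg (n : ℝ))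
    field_simp at this
    linarith
  have hgap : 0 < (i - k + 1 : ℝ) := by linarith
  have hsq : (k * (n - i) / n : ℝ) ^ 2 * (i - k + 1) ≤ k * (n - i) := by
    rw [div_pow, div_mul_eq_mul_div, div_le_iff₀ (by positivity)]
    nlinarith [mul_le_mul_of_nonneg_left hvar' hkD]
  refine le_of_mul_le_mul_right ?_ hgap
  rw [hypPMF_pred_mul hk hki hin, mul_right_comm]
  exact mul_le_mul_of_nonneg_right hsq (hypPMF_nonneg n i k k) |>.trans_eq (by ring)

theorem one_eighth_le_one_sub_pow {k : ℕ} {x s : ℝ} (hs : s < 1) (hsk : 2 * s ≤ k)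
    (hkx : k * x ≤ 8 * s / 7) : 1 / 8 ≤ (1 - x) ^ k := by
  rcases Nat.lt_or_ge k 2 with hk | hk
  · interval_cases k
    · norm_num
    · norm_num at hsk hkx ⊢; linarith
  · have hk' : (2 : ℝ) ≤ k := by exact_mod_cast hk
    have hy : (k / 2 : ℝ) * x ≤ 4 / 7 := by linarith [show (k / 2 : ℝ) * x = k * x / 2 by ring]
    have hbern := one_sub_div_mul_pow_le_one_sub_pow (x := x) two_pos hk (by linarith)
    push_cast at hbern
    nlinarith

theorem one_eighth_le_one_add_sq_mul_one_sub_pow {k : ℕ} {x s : ℝ} (hs1 : 1 ≤ s) (hs2 : s ≤ 2)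
    (hsk : 2 * s ≤ k) (hkx : k * x ≤ 8 * s / 7) : 1 / 8 ≤ (1 + s ^ 2) * (1 - x) ^ k := by
  have hk2 : 2 ≤ k := by exact_mod_cast (show (2 : ℝ) ≤ k by linarith)
  rcases Nat.lt_or_ge k 4 with hk | hk
  · interval_cases k
    · norm_num at hsk hkx ⊢
      have hs : s = 1 := by linarith
      subst hs
      nlinarith
    · norm_num at hsk hkx ⊢
      have hx : 1 - 8 * s / 21 ≤ 1 - x := by linarith
      have hcube : (1 - 8 * s / 21) ^ 3 ≤ (1 - x) ^ 3 := pow_le_pow_left₀ (by linarith) hx 3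
      have hpoly : (1 / 8 : ℝ) ≤ (1 + s ^ 2) * (1 - 8 * s / 21) ^ 3 := by
        nlinarith [mul_nonneg (sub_nonneg.2 hs1) (sub_nonneg.2 hsk),
          mul_nonneg (mul_nonneg (sub_nonneg.2 hs1) (sub_nonneg.2 hsk)) (sub_nonneg.2 hs1),
          mul_nonneg (mul_nonneg (sub_nonneg.2 hs1) (sub_nonneg.2 hsk)) (sub_nonneg.2 hsk)]
      nlinarith
  · have hk' : (4 : ℝ) ≤ k := by exact_mod_cast hk
    have hy : (k / 4 : ℝ) * x ≤ 2 * s / 7 := by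
      linarith [show (k / 4 : ℝ) * x = k * x / 4 by ring]
    have hbern := one_sub_div_mul_pow_le_one_sub_pow (x := x) four_pos hk (by linarith)
    push_cast at hbern
    have hquart : (1 - 2 * s / 7) ^ 4 ≤ (1 - k / 4 * x) ^ 4 :=
      pow_le_pow_left₀ (by linarith) (by linarith) 4
    have hpoly : (1 / 8 : ℝ) ≤ (1 + s ^ 2) * (1 - 2 * s / 7) ^ 4 := by
      nlinarith [sq_nonneg (s - 2), sq_nonneg (s - 1), mul_nonneg (sub_nonneg.2 hs1) (sub_nonneg.2 hs2),
        sq_nonneg s, sq_nonneg (s * s - 2)]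
    nlinarith [hquart.trans hbern]

theorem mul_sub_div_lt_two {n i k : ℝ} (hn : 0 < n) (hhalf : n < 2 * i)
    (hvar : k * (i / n) * ((n - i) / n) < 1) : k * (n - i) / n < 2 := by
  have hprod : k * (n - i) / n * (i / n) < 1 := by convert hvar using 1; ring
  have hi : (1 / 2 : ℝ) < i / n := by rw [lt_div_iff₀ hn]; linarith
  nlinarith

theorem two_mul_mul_sub_div_le {n i k : ℝ} (hn : 0 < n) (hk : 0 ≤ k) (hhalf : n ≤ 2 * i) :
    2 * (k * (n - i) / n) ≤ k := by
  rw [mul_div_assoc', div_le_iff₀ hn]; nlinarith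

theorem mul_div_sub_add_one_le {n i k : ℝ} (hn : 0 < n) (hk : 0 ≤ k) (hin : i ≤ n)
    (h8 : 8 * k ≤ n) : k * ((n - i) / (n - k + 1)) ≤ 8 * (k * (n - i) / n) / 7 := by
  calc k * ((n - i) / (n - k + 1)) = k * (n - i) / (n - k + 1) := by rw [mul_div_assoc]
    _ ≤ k * (n - i) / (7 * n / 8) :=
      div_le_div_of_nonneg_left (by nlinarith) (by positivity) (by linarith)
    _ = 8 * (k * (n - i) / n) / 7 := by field_simp

theorem hyp_tail_ge_of_var_small_i_gt_general (n k i : ℕ) (hn : 0 < n) (hk : 0 < k)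
    (h8 : 8 * k ≤ n) (hi2 : i ≤ n)
    (hvar : (k : ℝ) * ((i : ℝ) / n) * (((n : ℝ) - i) / n) < 1)
    (hhalf : n < 2 * i) :
    (k : ℝ) / n ≤ hypTail n i k ((i * k : ℝ) / n) := by
  have hki : k ≤ i := by omega
  have hN : (0 : ℝ) < n := by exact_mod_cast hn
  have h8' : 8 * (k : ℝ) ≤ n := by exact_mod_cast h8
  have hi2' : (i : ℝ) ≤ n := by exact_mod_cast hi2
  have hhalf' : (n : ℝ) < 2 * i := by exact_mod_cast hhalf
  set s : ℝ := k * (n - i) / n with hs_def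
  set x : ℝ := (n - i) / (n - k + 1)
  have hs0 : 0 ≤ s := by positivity
  have hthreshold : (i * k : ℝ) / n = k - s := by rw [hs_def]; field_simp; ring
  have hs2 : s < 2 := mul_sub_div_lt_two hN hhalf' hvar
  have hsk : 2 * s ≤ k := two_mul_mul_sub_div_le hN k.cast_nonneg hhalf'.le
  have hkx : k * x ≤ 8 * s / 7 := mul_div_sub_add_one_le hN k.cast_nonneg hi2' h8'
  have hkn : (k : ℝ) / n ≤ 1 / 8 := by rw [div_le_iff₀ hN]; linarith
  have htop : (1 - x) ^ k ≤ hypPMF n i k k := one_sub_pow_le_hypPMF_self hki hi2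
  rw [hthreshold]
  rcases lt_or_ge s 1 with hs1 | hs1
  · calc (k : ℝ) / n ≤ 1 / 8 := hkn
      _ ≤ (1 - x) ^ k := one_eighth_le_one_sub_pow hs1 hsk hkx
      _ ≤ hypPMF n i k k := htop
      _ ≤ _ := hypPMF_self_le_hypTail (by linarith)
  · have hpred : s ^ 2 * hypPMF n i k k ≤ hypPMF n i k (k - 1) :=
      sq_mul_hypPMF_self_le_hypPMF_pred hk hki hi2 hvar.le
    calc (k : ℝ) / n ≤ 1 / 8 := hkn
      _ ≤ (1 + s ^ 2) * (1 - x) ^ k :=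
        one_eighth_le_one_add_sq_mul_one_sub_pow hs1 hs2.le hsk hkx
      _ ≤ (1 + s ^ 2) * hypPMF n i k k := by gcongr
      _ ≤ hypPMF n i k (k - 1) + hypPMF n i k k := by linarith
      _ ≤ _ := hypPMF_pred_add_hypPMF_self_le_hypTail hk (by linarith)

/-- If `n ≥ 8k`, `i ∈ {1,…,n}`, `k·(i/n)·((n−i)/n) < 1` and `i > n/2`, then for
`H ~ Hyp(n,i,k)` one has `P(H ≥ i·k/n) ≥ k/n`. -/
theorem hyp_tail_ge_of_var_small_i_gt (n k i : ℕ) (hn : 0 < n) (hk : 0 < k)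
    (h8 : 8 * k ≤ n) (hi1 : 1 ≤ i) (hi2 : i ≤ n)
    (hvar : (k : ℝ) * ((i : ℝ) / n) * (((n : ℝ) - i) / n) < 1)
    (hhalf : n < 2 * i) :
    (k : ℝ) / n ≤ hypTail n i k ((i * k : ℝ) / n) :=
  hyp_tail_ge_of_var_small_i_gt_general n k i hn hk h8 hi2 hvar hhalf
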